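/- Let N : (0, R] → [0, ∞) be differentiable with N'(r) ≥ −(2/r)N(r)(1+N(r)), fix μ ∈ (0, 1/100), and define N̄(r) = (π/2)∫₀¹ sin(πτ) N((1−τμ)r) dτ. If r ∈ (0, R] and N̄(r) ≤ 1, then N((1−μ)r) ≤ N̄(r)/(1−μ)⁵. -/

import Mathlib

/-!
Since N' ≥ -(2/s) N (1 + N), the function s ↦ s² · N(s)/(1 + N(s)) is nondecreasing. Comparing
its values at (1-μ)r and at s ∈ [(1-μ)r, r] bounds N from below on that interval by the number
C with C/(1 + C) = (1-μ)² N((1-μ)r)/(1 + N((1-μ)r)); hence also N̄(r) ≥ C, the weight having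
mass 1. The hypothesis N̄(r) ≤ 1 forces C ≤ 1, which caps N((1-μ)r), and for μ < 1/100 this cap
turns C ≥ (1-μ)⁵ N((1-μ)r) into an elementary polynomial inequality.
-/

open Real Set

lemma monotoneOn_sq_mul_div_one_add {N N' : ℝ → ℝ} {a b : ℝ} (ha : 0 < a)
    (hN0 : ∀ s ∈ Icc a b, 0 ≤ N s) (hderiv : ∀ s ∈ Icc a b, HasDerivAt N (N' s) s)
    (hineq : ∀ s ∈ Icc a b, -(2 / s) * N s * (1 + N s) ≤ N' s) :
    MonotoneOn (fun s => s ^ 2 * (N s / (1 + N s))) (Icc a b) := by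
  have hG : ∀ s ∈ Icc a b, HasDerivAt (fun s => s ^ 2 * (N s / (1 + N s)))
      (2 * s * (N s / (1 + N s)) + s ^ 2 * (N' s / (1 + N s) ^ 2)) s := by
    intro s hs
    have hquot := (hderiv s hs).div ((hderiv s hs).const_add 1) (by linarith [hN0 s hs])
    exact ((hasDerivAt_pow 2 s).mul hquot).congr_deriv (by simp only [Pi.div_apply]; ring)
  apply monotoneOn_of_deriv_nonneg (convex_Icc a b)
  · exact fun s hs => (hG s hs).continuousAt.continuousWithinAt
  · rw [interior_Icc]
    exact fun s hs => (hG s (Ioo_subset_Icc_self hs)).differentiableAt.differentiableWithinAt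
  · rw [interior_Icc]
    intro s hs
    have hs' := Ioo_subset_Icc_self hs
    have hs0 : 0 < s := ha.trans hs.1
    have hscaled : -(2 * s) * (N s * (1 + N s)) ≤ s ^ 2 * N' s :=
      calc -(2 * s) * (N s * (1 + N s)) = s ^ 2 * (-(2 / s) * N s * (1 + N s)) := by
            field_simp
        _ ≤ s ^ 2 * N' s := mul_le_mul_of_nonneg_left (hineq s hs') (sq_nonneg s)
    rw [(hG s hs').deriv]
    have hnum : 0 ≤ 2 * s * (N s * (1 + N s)) + s ^ 2 * N' s := by linarith
    calc (0 : ℝ) ≤ (2 * s * (N s * (1 + N s)) + s ^ 2 * N' s) / (1 + N s) ^ 2 := by positivity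
      _ = _ := by field_simp

/-- The number `q x / (1 + x - q x)` is the `y` with `y / (1 + y) = q · x / (1 + x)`. -/
lemma le_of_mul_div_one_add_le {q x y : ℝ} (hq : q ≤ 1) (hx : 0 ≤ x) (hy : 0 ≤ y)
    (h : q * (x / (1 + x)) ≤ y / (1 + y)) :
    q * x / (1 + x - q * x) ≤ y := by
  have hD : 0 < 1 + x - q * x := by nlinarith [mul_le_mul_of_nonneg_right hq hx]
  rw [← mul_div_assoc, div_le_div_iff₀ (by positivity) (by positivity)] at h
  rw [div_le_iff₀ hD]
  nlinarith

lemma le_of_monotoneOn_sq_mul_div_one_add {N : ℝ → ℝ} {v r s : ℝ} (hv0 : 0 < v) (hv1 : v ≤ 1)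
    (hr : 0 < r) (hN0 : ∀ s ∈ Icc (v * r) r, 0 ≤ N s)
    (hmono : MonotoneOn (fun s => s ^ 2 * (N s / (1 + N s))) (Icc (v * r) r))
    (hs : s ∈ Icc (v * r) r) :
    v ^ 2 * N (v * r) / (1 + N (v * r) - v ^ 2 * N (v * r)) ≤ N s := by
  have hvr : v * r ≤ r := by nlinarith
  have hleft : v * r ∈ Icc (v * r) r := ⟨le_rfl, hvr⟩
  have hNs := hN0 s hs
  refine le_of_mul_div_one_add_le (pow_le_one₀ hv0.le hv1) (hN0 _ hleft) hNs ?_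
  have hs2 : s ^ 2 ≤ r ^ 2 := pow_le_pow_left₀ ((mul_pos hv0 hr).le.trans hs.1) hs.2 2
  have hchain : (v * r) ^ 2 * (N (v * r) / (1 + N (v * r))) ≤ r ^ 2 * (N s / (1 + N s)) :=
    (hmono hleft hs hs.1).trans (mul_le_mul_of_nonneg_right hs2 (by positivity))
  rw [mul_pow, mul_comm (v ^ 2), mul_assoc] at hchain
  exact le_of_mul_le_mul_left hchain (by positivity)

lemma integral_sin_pi_mul : ∫ t in (0 : ℝ)..1, sin (π * t) = 2 / π := by
  rw [intervalIntegral.integral_comp_mul_left (fun x => sin x) pi_ne_zero]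
  simp only [mul_zero, mul_one, integral_sin, cos_zero, cos_pi, smul_eq_mul]
  ring

lemma le_pi_div_two_mul_integral_sin_mul {f : ℝ → ℝ} {c : ℝ}
    (hf : IntervalIntegrable f MeasureTheory.volume 0 1) (hc : ∀ t ∈ Icc (0 : ℝ) 1, c ≤ f t) :
    c ≤ π / 2 * ∫ t in (0 : ℝ)..1, sin (π * t) * f t := by
  have hsin : ∀ t ∈ Icc (0 : ℝ) 1, 0 ≤ sin (π * t) := fun t ht =>
    sin_nonneg_of_nonneg_of_le_pi (by nlinarith [pi_pos, ht.1]) (by nlinarith [pi_pos, ht.2])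
  have hmono : ∫ t in (0 : ℝ)..1, sin (π * t) * c ≤ ∫ t in (0 : ℝ)..1, sin (π * t) * f t :=
    intervalIntegral.integral_mono_on zero_le_one (Continuous.intervalIntegrable (by fun_prop) 0 1)
      (hf.continuousOn_mul (by fun_prop)) fun t ht => mul_le_mul_of_nonneg_left (hc t ht) (hsin t ht)
  rw [intervalIntegral.integral_mul_const, integral_sin_pi_mul] at hmono
  calc c = π / 2 * (2 / π * c) := by field_simp
    _ ≤ _ := by gcongr

/-- `hC` caps `x` by `x (2v² - 1) ≤ 1`; since `v⁵ ≤ 2v² - 1` on `[99/100, 1]`, this yields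
`v³ (1 + x - v² x) ≤ 1`, which is the claim. -/
lemma pow_five_mul_le_of_le_one {v x : ℝ} (hv : 99 / 100 ≤ v) (hv1 : v ≤ 1) (hx : 0 ≤ x)
    (hC : v ^ 2 * x / (1 + x - v ^ 2 * x) ≤ 1) :
    v ^ 5 * x ≤ v ^ 2 * x / (1 + x - v ^ 2 * x) := by
  have hv2 : v ^ 2 ≤ 1 := by nlinarith
  have hD : 0 < 1 + x - v ^ 2 * x := by nlinarith [mul_le_mul_of_nonneg_right hv2 hx]
  have hcap : x * (2 * v ^ 2 - 1) ≤ 1 := by rw [div_le_one hD] at hC; linarith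
  have hquartic : 0 ≤ v ^ 4 + v ^ 3 + v ^ 2 - v - 1 := by
    nlinarith [pow_le_pow_left₀ (by norm_num) hv 2, pow_le_pow_left₀ (by norm_num) hv 3,
      pow_le_pow_left₀ (by norm_num) hv 4]
  have hv5 : v ^ 5 ≤ 2 * v ^ 2 - 1 := by nlinarith [mul_nonneg (sub_nonneg.2 hv1) hquartic]
  have hv3D : v ^ 3 * (1 + x - v ^ 2 * x) ≤ 1 := by
    have := mul_le_mul_of_nonneg_left hcap (by nlinarith : (0 : ℝ) ≤ v ^ 3 * (1 - v ^ 2))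
    nlinarith
  rw [le_div_iff₀ hD]
  nlinarith [mul_le_mul_of_nonneg_left hv3D (mul_nonneg (sq_nonneg v) hx)]

theorem stmt_8_general (R : ℝ) (N N' : ℝ → ℝ)
    (hN0 : ∀ r ∈ Set.Ioc (0:ℝ) R, 0 ≤ N r)
    (hderiv : ∀ r ∈ Set.Ioc (0:ℝ) R, HasDerivAt N (N' r) r)
    (hineq : ∀ r ∈ Set.Ioc (0:ℝ) R, -(2 / r) * N r * (1 + N r) ≤ N' r)
    (μ : ℝ) (hμ : μ ∈ Set.Ioo (0:ℝ) (1/100))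
    (r : ℝ) (hr : r ∈ Set.Ioc (0:ℝ) R)
    (hNbar :
      (Real.pi / 2) * ∫ t in (0:ℝ)..1, Real.sin (Real.pi * t) * N ((1 - t * μ) * r) ≤ 1) :
    N ((1 - μ) * r)
      ≤ ((Real.pi / 2) * ∫ t in (0:ℝ)..1, Real.sin (Real.pi * t) * N ((1 - t * μ) * r))
          / (1 - μ) ^ 5 := by
  obtain ⟨hr0, hrR⟩ := hr
  obtain ⟨hμ0, hμ1⟩ := hμ
  have hsub : Icc ((1 - μ) * r) r ⊆ Ioc 0 R := fun s hs =>
    ⟨(mul_pos (by linarith) hr0).trans_le hs.1, hs.2.trans hrR⟩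
  have hmono := monotoneOn_sq_mul_div_one_add (mul_pos (by linarith) hr0)
    (fun s hs => hN0 s (hsub hs)) (fun s hs => hderiv s (hsub hs)) (fun s hs => hineq s (hsub hs))
  have hmaps : MapsTo (fun t => (1 - t * μ) * r) (Icc 0 1) (Icc ((1 - μ) * r) r) :=
    fun t ht => ⟨by nlinarith [mul_nonneg (mul_nonneg (sub_nonneg.2 ht.2) hμ0.le) hr0.le],
      by nlinarith [mul_nonneg (mul_nonneg ht.1 hμ0.le) hr0.le]⟩
  have hcont : ContinuousOn (fun t => N ((1 - t * μ) * r)) (Icc 0 1) :=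
    (HasDerivAt.continuousOn fun s hs => hderiv s (hsub hs)).comp (by fun_prop) hmaps
  have hlower := le_pi_div_two_mul_integral_sin_mul
    (hcont.intervalIntegrable_of_Icc zero_le_one) fun t ht =>
      le_of_monotoneOn_sq_mul_div_one_add (by linarith) (by linarith) hr0
        (fun s hs => hN0 s (hsub hs)) hmono (hmaps ht)
  rw [le_div_iff₀ (pow_pos (by linarith) 5), mul_comm]
  exact (pow_five_mul_le_of_le_one (by linarith) (by linarith)
    (hN0 _ (hsub ⟨le_rfl, by nlinarith⟩)) (hlower.trans hNbar)).trans hlower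

theorem stmt_8 (R : ℝ) (hR : 0 < R) (N N' : ℝ → ℝ)
    (hN0 : ∀ r ∈ Set.Ioc (0:ℝ) R, 0 ≤ N r)
    (hderiv : ∀ r ∈ Set.Ioc (0:ℝ) R, HasDerivAt N (N' r) r)
    (hineq : ∀ r ∈ Set.Ioc (0:ℝ) R, -(2 / r) * N r * (1 + N r) ≤ N' r)
    (μ : ℝ) (hμ : μ ∈ Set.Ioo (0:ℝ) (1/100))
    (r : ℝ) (hr : r ∈ Set.Ioc (0:ℝ) R)
    (hNbar :
      (Real.pi / 2) * ∫ t in (0:ℝ)..1, Real.sin (Real.pi * t) * N ((1 - t * μ) * r) ≤ 1) :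
    N ((1 - μ) * r)
      ≤ ((Real.pi / 2) * ∫ t in (0:ℝ)..1, Real.sin (Real.pi * t) * N ((1 - t * μ) * r))
          / (1 - μ) ^ 5 :=
  stmt_8_general R N N' hN0 hderiv hineq μ hμ r hr hNbar
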